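/- Fix nonzero integers λ₁,…,λ_{n−1} and a symmetric integer matrix (μ_{j,t})_{j,t=1}^{n−1}. Define a relation ≡ on ℂ^{n−1} × ℝ × ℂ by: (z,θ,η) ≡ (z̃,θ̃,η̃) if and only if (z,θ) ∼ (z̃,θ̃) (in the compact-Heisenberg sense, with α = z̃ − z in the lattice √(2π)ℤ^{n−1}+i√(2π)ℤ^{n−1} and θ̃ − θ − i∑λ_j(z_j·conj(α_j) − conj(z_j)α_j) ∈ 2πℤ) and η̃ = η·exp(∑_{j,t=1}^{n−1} μ_{j,t}(z_j·conj(α_t) + (1/2)α_j·conj(α_t))). Then ≡ is an equivalence relation on ℂ^{n−1} × ℝ × ℂ. -/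
import Mathlib


open ComplexConjugate

/-- membership in the lattice `√(2π)ℤ^m + i√(2π)ℤ^m ⊂ ℂ^m`. -/
def inLattice (m : ℕ) (α : Fin m → ℂ) : Prop :=
  ∃ a b : Fin m → ℤ,
    ∀ j, α j = (Real.sqrt (2 * Real.pi) : ℂ) * ((a j : ℂ) + (b j : ℂ) * Complex.I)

/-- the quantity `i·∑ λ_j (z_j conj(α_j) − conj(z_j) α_j)`. -/
noncomputable def heisSum (m : ℕ) (lam : Fin m → ℤ) (z α : Fin m → ℂ) : ℂ :=
  Complex.I * ∑ j, (lam j : ℂ) * (z j * conj (α j) - conj (z j) * α j)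

/-- the relation `∼` defining the compact Heisenberg group. -/
def heisRel (m : ℕ) (lam : Fin m → ℤ) :
    ((Fin m → ℂ) × ℝ) → ((Fin m → ℂ) × ℝ) → Prop := fun p p' =>
  inLattice m (fun j => p'.1 j - p.1 j) ∧
  ∃ k : ℤ, ((p'.2 - p.2 : ℝ) : ℂ) - heisSum m lam p.1 (fun j => p'.1 j - p.1 j)
      = ((2 * Real.pi * k : ℝ) : ℂ)

/-- the relation `≡` defining the `T`-rigid CR line bundle `L` over the compact
Heisenberg group: `(z,θ,η) ≡ (z̃,θ̃,η̃)` iff `(z,θ) ∼ (z̃,θ̃)` and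
`η̃ = η·exp(∑ μ_{j,t}(z_j conj(α_t) + ½ α_j conj(α_t)))` with `α = z̃ − z`. -/
noncomputable def lineRel (m : ℕ) (lam : Fin m → ℤ) (μ : Fin m → Fin m → ℤ) :
    ((Fin m → ℂ) × ℝ × ℂ) → ((Fin m → ℂ) × ℝ × ℂ) → Prop := fun p p' =>
  heisRel m lam (p.1, p.2.1) (p'.1, p'.2.1) ∧
  p'.2.2 = p.2.2 * Complex.exp (∑ j, ∑ t, (μ j t : ℂ) *
      (p.1 j * conj (p'.1 t - p.1 t)
        + (1 / 2) * (p'.1 j - p.1 j) * conj (p'.1 t - p.1 t)))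

/-! ### Auxiliary lemmas -/

/-- the basic lattice generator `√(2π)(a + b i)`. -/
noncomputable def latt (a b : ℤ) : ℂ :=
  (Real.sqrt (2 * Real.pi) : ℂ) * ((a : ℂ) + (b : ℂ) * Complex.I)

lemma hs_sq : (Real.sqrt (2 * Real.pi) : ℂ) * (Real.sqrt (2 * Real.pi) : ℂ)
    = ((2 * Real.pi : ℝ) : ℂ) := by
  rw [← Complex.ofReal_mul, Real.mul_self_sqrt (by positivity)]

lemma conj_latt (a b : ℤ) : conj (latt a b)
    = (Real.sqrt (2 * Real.pi) : ℂ) * ((a : ℂ) - (b : ℂ) * Complex.I) := by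
  simp only [latt, map_mul, map_add, Complex.conj_I, map_intCast,
    Complex.conj_ofReal, mul_neg]
  ring

lemma key (a b c d : ℤ) :
    conj (latt a b) * latt c d - latt a b * conj (latt c d)
      = ((2 * Real.pi : ℝ) : ℂ) * (2 * ((a : ℂ) * d - (b : ℂ) * c)) * Complex.I := by
  rw [conj_latt, conj_latt, latt, latt]
  linear_combination (2 * ((a : ℂ) * d - (b : ℂ) * c) * Complex.I) * hs_sq

lemma exp_eq_of_sub (x y : ℂ) (M : ℤ) (h : x = y + (M : ℂ) * (2 * Real.pi * Complex.I)) :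
    Complex.exp x = Complex.exp y := by
  rw [h, Complex.exp_add, Complex.exp_int_mul_two_pi_mul_I, mul_one]

lemma heisSum_rev (m : ℕ) (lam : Fin m → ℤ) (z z' : Fin m → ℂ) :
    heisSum m lam z' (fun j => z j - z' j) = - heisSum m lam z (fun j => z' j - z j) := by
  unfold heisSum
  rw [← mul_neg, ← Finset.sum_neg_distrib]
  refine congrArg _ (Finset.sum_congr rfl fun j _ => ?_)
  simp only [map_sub]
  ring

lemma heisSum_split (m : ℕ) (lam : Fin m → ℤ) (z z' z'' : Fin m → ℂ) :
    heisSum m lam z (fun j => z'' j - z j)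
      = heisSum m lam z (fun j => z' j - z j) + heisSum m lam z' (fun j => z'' j - z' j)
        + Complex.I * ∑ j, (lam j : ℂ) *
            (conj (z' j - z j) * (z'' j - z' j) - (z' j - z j) * conj (z'' j - z' j)) := by
  unfold heisSum
  rw [← mul_add, ← mul_add, ← Finset.sum_add_distrib, ← Finset.sum_add_distrib]
  refine congrArg _ (Finset.sum_congr rfl fun j _ => ?_)
  simp only [map_sub]
  ring

lemma lattice_pair (m : ℕ) (lam : Fin m → ℤ) (A B : Fin m → ℂ)
    (a1 b1 a2 b2 : Fin m → ℤ)
    (hA : ∀ j, A j = latt (a1 j) (b1 j)) (hB : ∀ j, B j = latt (a2 j) (b2 j)) :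
    ∃ K : ℤ, Complex.I * ∑ j, (lam j : ℂ) * (conj (A j) * B j - A j * conj (B j))
      = ((2 * Real.pi * K : ℝ) : ℂ) := by
  refine ⟨∑ j, -(2 * lam j * (a1 j * b2 j - b1 j * a2 j)), ?_⟩
  rw [Finset.mul_sum]
  push_cast
  rw [Finset.mul_sum]
  refine Finset.sum_congr rfl fun j _ => ?_
  rw [hA j, hB j, key]
  push_cast
  linear_combination (2 * (Real.pi : ℂ) * (lam j : ℂ)
    * (2 * ((a1 j : ℂ) * (b2 j : ℂ) - (b1 j : ℂ) * (a2 j : ℂ)))) * Complex.I_mul_I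

lemma exp_trans (m : ℕ) (μ : Fin m → Fin m → ℤ) (hμ : ∀ j t, μ j t = μ t j)
    (z z' z'' : Fin m → ℂ) (a1 b1 a2 b2 : Fin m → ℤ)
    (hab1 : ∀ j, z' j - z j = latt (a1 j) (b1 j))
    (hab2 : ∀ j, z'' j - z' j = latt (a2 j) (b2 j)) :
    ∃ M : ℤ,
      (∑ j, ∑ t, (μ j t : ℂ) *
        (z j * conj (z'' t - z t) + (1 / 2) * (z'' j - z j) * conj (z'' t - z t)))
      = ((∑ j, ∑ t, (μ j t : ℂ) *
            (z j * conj (z' t - z t) + (1 / 2) * (z' j - z j) * conj (z' t - z t)))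
        + (∑ j, ∑ t, (μ j t : ℂ) *
            (z' j * conj (z'' t - z' t) + (1 / 2) * (z'' j - z' j) * conj (z'' t - z' t))))
        + (M : ℂ) * (2 * Real.pi * Complex.I) := by
  refine ⟨∑ j, ∑ t, μ j t * (a1 j * b2 t - b1 j * a2 t), ?_⟩
  -- step 1: the difference of the three double sums
  have step1 :
      (∑ j, ∑ t, (μ j t : ℂ) *
          (z j * conj (z'' t - z t) + (1 / 2) * (z'' j - z j) * conj (z'' t - z t)))
        - (∑ j, ∑ t, (μ j t : ℂ) *
            (z j * conj (z' t - z t) + (1 / 2) * (z' j - z j) * conj (z' t - z t)))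
        - (∑ j, ∑ t, (μ j t : ℂ) *
            (z' j * conj (z'' t - z' t) + (1 / 2) * (z'' j - z' j) * conj (z'' t - z' t)))
      = (∑ j, ∑ t, (μ j t : ℂ) * ((1 / 2) * ((z'' j - z' j) * conj (z' t - z t))))
        - (∑ j, ∑ t, (μ j t : ℂ) * ((1 / 2) * ((z' j - z j) * conj (z'' t - z' t)))) := by
    rw [← Finset.sum_sub_distrib, ← Finset.sum_sub_distrib, ← Finset.sum_sub_distrib]
    refine Finset.sum_congr rfl fun j _ => ?_
    rw [← Finset.sum_sub_distrib, ← Finset.sum_sub_distrib, ← Finset.sum_sub_distrib]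
    refine Finset.sum_congr rfl fun t _ => ?_
    simp only [map_sub]
    ring
  -- step 2: swap the indices in the first sum, using the symmetry of μ
  have hswap :
      (∑ j, ∑ t, (μ j t : ℂ) * ((1 / 2) * ((z'' j - z' j) * conj (z' t - z t))))
        = ∑ j, ∑ t, (μ j t : ℂ) * ((1 / 2) * (conj (z' j - z j) * (z'' t - z' t))) := by
    rw [Finset.sum_comm]
    refine Finset.sum_congr rfl fun j _ => Finset.sum_congr rfl fun t _ => ?_
    rw [hμ t j]
    ring
  -- step 3: evaluate the remaining sum using the lattice structure
  have step3 :
      (∑ j, ∑ t, (μ j t : ℂ) * ((1 / 2) * (conj (z' j - z j) * (z'' t - z' t))))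
        - (∑ j, ∑ t, (μ j t : ℂ) * ((1 / 2) * ((z' j - z j) * conj (z'' t - z' t))))
      = ((∑ j, ∑ t, μ j t * (a1 j * b2 t - b1 j * a2 t) : ℤ) : ℂ)
          * (2 * Real.pi * Complex.I) := by
    have cast_eq :
        ((∑ j, ∑ t, μ j t * (a1 j * b2 t - b1 j * a2 t) : ℤ) : ℂ)
            * (2 * Real.pi * Complex.I)
          = ∑ j, ∑ t, ((μ j t * (a1 j * b2 t - b1 j * a2 t) : ℤ) : ℂ)
              * (2 * Real.pi * Complex.I) := by
      push_cast
      rw [Finset.sum_mul]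
      exact Finset.sum_congr rfl fun j _ => by rw [Finset.sum_mul]
    rw [cast_eq, ← Finset.sum_sub_distrib]
    refine Finset.sum_congr rfl fun j _ => ?_
    rw [← Finset.sum_sub_distrib]
    refine Finset.sum_congr rfl fun t _ => ?_
    rw [hab1 j, hab2 t]
    have hkey := key (a1 j) (b1 j) (a2 t) (b2 t)
    push_cast at hkey ⊢
    linear_combination ((μ j t : ℂ) * (1 / 2)) * hkey
  linear_combination step1 + hswap + step3

theorem stmt_5 (n : ℕ) (hn : 2 ≤ n) (lam : Fin (n - 1) → ℤ)
    (hlam : ∀ j, lam j ≠ 0)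
    (μ : Fin (n - 1) → Fin (n - 1) → ℤ) (hμ : ∀ j t, μ j t = μ t j) :
    Equivalence (lineRel (n - 1) lam μ) := by
  constructor
  · -- reflexivity
    rintro ⟨z, θ, η⟩
    refine ⟨⟨⟨fun _ => 0, fun _ => 0, fun j => by simp⟩, 0, by simp [heisSum]⟩, by simp⟩
  · -- symmetry
    rintro ⟨z, θ, η⟩ ⟨z', θ', η'⟩ ⟨⟨⟨a, b, hab⟩, k, hk⟩, hη⟩
    try simp only [] at hab hk hη
    refine ⟨⟨⟨fun j => -a j, fun j => -b j, fun j => ?_⟩, -k, ?_⟩, ?_⟩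
    · simp only []
      rw [show (z j : ℂ) - z' j = -(z' j - z j) by ring, hab j]
      push_cast; ring
    · simp only []
      rw [heisSum_rev]
      push_cast at hk ⊢
      linear_combination -hk
    · simp only []
      have hE : (∑ j, ∑ t, (μ j t : ℂ) *
            (z' j * conj (z t - z' t) + (1 / 2) * (z j - z' j) * conj (z t - z' t)))
          = -(∑ j, ∑ t, (μ j t : ℂ) *
            (z j * conj (z' t - z t) + (1 / 2) * (z' j - z j) * conj (z' t - z t))) := by
        rw [← Finset.sum_neg_distrib]
        refine Finset.sum_congr rfl fun j _ => ?_
        rw [← Finset.sum_neg_distrib]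
        refine Finset.sum_congr rfl fun t _ => ?_
        simp only [map_sub]
        ring
      rw [hη, hE, mul_assoc, ← Complex.exp_add]
      simp
  · -- transitivity
    rintro ⟨z, θ, η⟩ ⟨z', θ', η'⟩ ⟨z'', θ'', η''⟩
      ⟨⟨⟨a1, b1, hab1⟩, k1, hk1⟩, hη1⟩ ⟨⟨⟨a2, b2, hab2⟩, k2, hk2⟩, hη2⟩
    try simp only [] at hab1 hab2 hk1 hk2 hη1 hη2
    obtain ⟨K, hK⟩ := lattice_pair (n - 1) lam (fun j => z' j - z j) (fun j => z'' j - z' j)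
      a1 b1 a2 b2 hab1 hab2
    try simp only [] at hK
    have hsplit := heisSum_split (n - 1) lam z z' z''
    rw [hK] at hsplit
    refine ⟨⟨⟨fun j => a1 j + a2 j, fun j => b1 j + b2 j, fun j => ?_⟩, k1 + k2 - K, ?_⟩, ?_⟩
    · simp only []
      rw [show (z'' j : ℂ) - z j = (z' j - z j) + (z'' j - z' j) by ring, hab1 j, hab2 j]
      push_cast; ring
    · simp only []
      rw [hsplit]
      push_cast at hk1 hk2 ⊢
      linear_combination hk1 + hk2
    · simp only []
      obtain ⟨M, hM⟩ := exp_trans (n - 1) μ hμ z z' z'' a1 b1 a2 b2 hab1 hab2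
      rw [hη2, hη1, mul_assoc, ← Complex.exp_add]
      congr 1
      exact (exp_eq_of_sub _ _ M hM).symm
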